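/- Let k be a field, let S be an integral domain that is essentially of finite type over k, and let f, g be nonzero elements of S with Q := (f,g)S ≠ S. Set R = k + Q и suppose R ≠ S. Then the sequence f, g is not a regular sequence on R. (Indeed, the first Čech cohomology H¹_{f,g}(R) is nonzero because S/R is a nonzero module annihilated by f and g.) -/

import Mathlib

/-- For an ideal `Q` of a commutative `k`-algebra `S`, the subalgebra `k + Q` of `S`,
consisting of all elements of the form `c • 1 + q` with `c ∈ k`, `q ∈ Q`. -/
def kPlus (k : Type*) {S : Type*} [CommRing k] [CommRing S] [Algebra k S]
    (Q : Ideal S) : Subalgebra k S where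
  carrier := {s : S | ∃ c : k, s - algebraMap k S c ∈ Q}
  add_mem' := by
    rintro a b ⟨c, hc⟩ ⟨d, hd⟩
    exact ⟨c + d, by rw [map_add]; convert Q.add_mem hc hd using 1; ring⟩
  mul_mem' := by
    rintro a b ⟨c, hc⟩ ⟨d, hd⟩
    refine ⟨c * d, ?_⟩
    have : a * b - algebraMap k S (c * d)
        = a * (b - algebraMap k S d) + algebraMap k S d * (a - algebraMap k S c) := by
      rw [map_mul]; ring
    rw [this]
    exact Q.add_mem (Q.mul_mem_left _ hd) (Q.mul_mem_left _ hc)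
  algebraMap_mem' := fun c => ⟨c, by simp⟩

/-- For `s ∈ S`, the relation `b · (a s) = a · (b s)` in `R` forces `a s ∈ aR` when `b` is regular
on `R ⧸ aR`; cancelling `a` in `S` then puts `s` in `R`. -/
theorem Subalgebra.eq_top_of_isSMulRegular_quotSMulTop {k S : Type*} [CommRing k] [CommRing S]
    [Algebra k S] (R : Subalgebra k S) (a b : R) (ha : IsSMulRegular S (a : S))
    (haR : ∀ s : S, (a : S) * s ∈ R) (hbR : ∀ s : S, (b : S) * s ∈ R)
    (hb : IsSMulRegular (QuotSMulTop a R) b) : R = ⊤ := by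
  refine eq_top_iff.mpr fun s _ => ?_
  set u : R := ⟨a * s, haR s⟩
  have hcomm : b • u = a • (⟨b * s, hbR s⟩ : R) := Subtype.ext (mul_left_comm _ _ _)
  have hu : (Submodule.Quotient.mk u : QuotSMulTop a R) = 0 := by
    refine hb (show b • _ = b • (0 : QuotSMulTop a R) from ?_)
    rw [smul_zero, ← Submodule.Quotient.mk_smul, hcomm, Submodule.Quotient.mk_eq_zero]
    exact Submodule.smul_mem_pointwise_smul _ a ⊤ trivial
  rw [Submodule.Quotient.mk_eq_zero, ← SetLike.mem_coe, Submodule.coe_pointwise_smul] at hu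
  obtain ⟨r, -, hr⟩ := Set.mem_smul_set.mp hu
  have hrs : (r : S) = s := ha (congrArg Subtype.val hr)
  exact hrs ▸ r.2

theorem mem_kPlus_of_mem (k : Type*) {S : Type*} [CommRing k] [CommRing S] [Algebra k S]
    {Q : Ideal S} {q : S} (hq : q ∈ Q) : q ∈ kPlus k Q :=
  ⟨0, by rwa [map_zero, sub_zero]⟩

set_option synthInstance.maxHeartbeats 1000000 in
set_option maxHeartbeats 2000000 in
/-- Let `k` be a field, `S` a domain essentially of finite type over `k`,
and `f, g` nonzero elements of `S` with `Q = (f,g)S ≠ S`.  Set `R = k + Q` and suppose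
`R ≠ S`.  Then `f, g` is not a regular sequence on `R`. -/
theorem kPlus_f_g_not_regularSequence (k : Type*) [Field k]
    (S : Type*) [CommRing S] [IsDomain S] [Algebra k S]
    (f g : S) (hf : f ≠ 0)
    (hRS : kPlus k (Ideal.span {f, g}) ≠ ⊤) :
    ¬ RingTheory.Sequence.IsRegular ↥(kPlus k (Ideal.span {f, g}))
        [(⟨f, 0, by rw [map_zero, sub_zero]; exact Ideal.subset_span (Set.mem_insert f {g})⟩ :
            ↥(kPlus k (Ideal.span {f, g}))),
         (⟨g, 0,
            by rw [map_zero, sub_zero]; exact Ideal.subset_span (Set.mem_insert_of_mem f rfl)⟩ :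
            ↥(kPlus k (Ideal.span {f, g})))] := by
  intro hreg
  have hweak := hreg.toIsWeaklyRegular
  rw [RingTheory.Sequence.isWeaklyRegular_cons_iff,
    RingTheory.Sequence.isWeaklyRegular_singleton_iff] at hweak
  obtain ⟨-, hg_regular⟩ := hweak
  refine hRS (Subalgebra.eq_top_of_isSMulRegular_quotSMulTop _ _ _
    (IsSMulRegular.of_ne_zero hf) (fun s => ?_) (fun s => ?_) hg_regular)
  · exact mem_kPlus_of_mem k (Ideal.mul_mem_right s _ (Ideal.subset_span (Set.mem_insert f {g})))
  · exact mem_kPlus_of_mem k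
      (Ideal.mul_mem_right s _ (Ideal.subset_span (Set.mem_insert_of_mem f rfl)))
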